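/- arXiv:2301.05482 — 2 statements merged into one kernel-verified Lean document; each statement's English description precedes it below -/
import Mathlib

section
/- Let G : ℝ² → Set ℝ² be defined by G(x₁,x₂) = {(2,2)} if x₂ ≠ 0 and G(x₁,x₂) = {(s,s) : 1 ≤ s ≤ 2} if x₂ = 0, and fix η ∈ (0,1). Define M : [0,1]×[0,1] → Set ℝ₊² by M(p₁,p₂) = [0,η]×[0,∞) if 0 ≤ p₁ ≤ η and M(p₁,p₂) = [0,p₁]×[0,∞) if η < p₁ ≤ 1. Then the coercivity condition C(p) holds at every p ∈ [0,1]×[0,1] with r_p = 1: for every y ∈ M(p) with ‖y‖ > 1 there exists z ∈ M(p) with ‖z‖ < ‖y‖ and ⟨y*, y - z⟩ ≥ 0 for all y* ∈ G(y). -/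
open RealInnerProductSpace

noncomputable def G5 : EuclideanSpace ℝ (Fin 2) → Set (EuclideanSpace ℝ (Fin 2)) := fun x =>
  if x 1 ≠ 0 then {WithLp.toLp 2 (fun _ => (2 : ℝ))}
  else {y | ∃ s : ℝ, 1 ≤ s ∧ s ≤ 2 ∧ y = WithLp.toLp 2 (fun _ => s)}

noncomputable def M5 (η : ℝ) : EuclideanSpace ℝ (Fin 2) → Set (EuclideanSpace ℝ (Fin 2)) := fun p =>
  if p 0 ≤ η then {y | 0 ≤ y 0 ∧ y 0 ≤ η ∧ 0 ≤ y 1}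
  else {y | 0 ≤ y 0 ∧ y 0 ≤ p 0 ∧ 0 ≤ y 1}

/- Every value `M(p)` is a box `[0, a] × [0, ∞)` containing any admissible `y` and hence the
origin, and every `y* ∈ G(y)` is a diagonal vector `(s, s)` with `s ≥ 1`. So `z = 0` works:
`‖0‖ < 1 < ‖y‖` and `⟨y*, y⟩ = s (y₁ + y₂) ≥ 0` since `y` lies in the closed positive quadrant. -/

theorem M5_eq_box (η : ℝ) (p : EuclideanSpace ℝ (Fin 2)) :
    M5 η p = {y | 0 ≤ y 0 ∧ y 0 ≤ max η (p 0) ∧ 0 ≤ y 1} := by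
  unfold M5
  split_ifs with h
  · rw [max_eq_left h]
  · rw [max_eq_right (not_le.mp h).le]

theorem zero_mem_M5_of_mem {η : ℝ} {p y : EuclideanSpace ℝ (Fin 2)} (hy : y ∈ M5 η p) :
    0 ∈ M5 η p := by
  rw [M5_eq_box] at hy ⊢
  exact ⟨le_rfl, hy.1.trans hy.2.1, le_rfl⟩

theorem exists_eq_diag_of_mem_G5 {x ys : EuclideanSpace ℝ (Fin 2)} (hys : ys ∈ G5 x) :
    ∃ s : ℝ, 1 ≤ s ∧ ys = WithLp.toLp 2 (fun _ => s) := by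
  unfold G5 at hys
  split_ifs at hys
  · exact ⟨2, one_le_two, hys⟩
  · obtain ⟨s, hs, -, rfl⟩ := hys
    exact ⟨s, hs, rfl⟩

theorem inner_diag_eq (s : ℝ) (y : EuclideanSpace ℝ (Fin 2)) :
    ⟪WithLp.toLp 2 (fun _ => s), y⟫ = s * (y 0 + y 1) := by
  simp [EuclideanSpace.inner_eq_star_dotProduct, dotProduct, Fin.sum_univ_two, mul_add, mul_comm]

theorem inner_nonneg_of_mem_G5 {η : ℝ} {p x y ys : EuclideanSpace ℝ (Fin 2)}
    (hys : ys ∈ G5 x) (hy : y ∈ M5 η p) : 0 ≤ ⟪ys, y⟫ := by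
  obtain ⟨s, hs, rfl⟩ := exists_eq_diag_of_mem_G5 hys
  rw [M5_eq_box] at hy
  rw [inner_diag_eq]
  exact mul_nonneg (zero_le_one.trans hs) (add_nonneg hy.1 hy.2.2)

theorem stmt_5_general (η : ℝ)
    (p : EuclideanSpace ℝ (Fin 2)) :
    ∀ y ∈ M5 η p, ‖y‖ > 1 →
      ∃ z ∈ M5 η p, ‖z‖ < ‖y‖ ∧ ∀ ys ∈ G5 y, ⟪ys, y - z⟫ ≥ 0 := by
  intro y hy hny
  refine ⟨0, zero_mem_M5_of_mem hy, by simpa using one_pos.trans hny, fun ys hys => ?_⟩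
  rw [sub_zero]
  exact inner_nonneg_of_mem_G5 hys hy

/-- For the maps `G` and `M` of Example 2.1, the coercivity condition `C(p)` holds at every
`p ∈ [0,1] × [0,1]` with `r_p = 1`. -/
theorem stmt_5 (η : ℝ) (hη : η ∈ Set.Ioo (0 : ℝ) 1)
    (p : EuclideanSpace ℝ (Fin 2)) (hp : p 0 ∈ Set.Icc (0 : ℝ) 1 ∧ p 1 ∈ Set.Icc (0 : ℝ) 1) :
    ∀ y ∈ M5 η p, ‖y‖ > 1 →
      ∃ z ∈ M5 η p, ‖z‖ < ‖y‖ ∧ ∀ ys ∈ G5 y, ⟪ys, y - z⟫ ≥ 0 :=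
  stmt_5_general η p
end

section
/- In the two-agent, two-good exchange economy with X₁ = {(x¹,x²) ∈ ℝ² : x² ≥ 0}, X₂ = ℝ²₊, endowments e₁ = e₂ = (1,1), and utilities u₁(x¹,x²) = x² and u₂(x¹,x²) = x¹ + x², there is no Walrasian equilibrium: there is no price p ∈ ℝ² \ {0} and allocation (x̄₁, x̄₂) with x̄ᵢ maximizing uᵢ over the budget set {xᵢ ∈ Xᵢ : ⟨p, xᵢ⟩ ≤ ⟨p, eᵢ⟩} for each i and x̄₁ + x̄₂ = e₁ + e₂. -/
/-!
If the first good has a positive price, agent 1 can sell arbitrarily much of it (`X₁` is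
unbounded below in that coordinate) and so afford more of the second good than any candidate
optimum. If its price is nonpositive, agent 2 can add a unit of it without leaving the budget
set and strictly gain. Either way one agent has no optimal bundle.
-/

open RealInnerProductSpace

namespace EuclideanSpace

lemma inner_fin_two (p x : EuclideanSpace ℝ (Fin 2)) : ⟪p, x⟫ = p 0 * x 0 + p 1 * x 1 := by
  simp only [PiLp.inner_apply, Fin.sum_univ_two, RCLike.inner_apply, conj_trivial]
  ring

end EuclideanSpace

open EuclideanSpace

lemma fst_price_pos_of_isMax_add {p x : EuclideanSpace ℝ (Fin 2)} {w : ℝ}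
    (hx : 0 ≤ x 0 ∧ 0 ≤ x 1) (hbudget : ⟪p, x⟫ ≤ w)
    (hmax : ∀ y : EuclideanSpace ℝ (Fin 2), 0 ≤ y 0 ∧ 0 ≤ y 1 → ⟪p, y⟫ ≤ w →
      y 0 + y 1 ≤ x 0 + x 1) :
    0 < p 0 := by
  by_contra! hp
  let y := x + single 0 1
  have hy0 : y 0 = x 0 + 1 := by simp [y]
  have hy1 : y 1 = x 1 := by simp [y]
  have hcost : ⟪p, y⟫ = ⟪p, x⟫ + p 0 := by
    simp [y, inner_add_right, inner_single_right]
  have := hmax y ⟨by linarith, by linarith⟩ (by linarith)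
  linarith

lemma fst_price_nonpos_of_isMax_snd {p x : EuclideanSpace ℝ (Fin 2)} {w : ℝ}
    (hmax : ∀ y : EuclideanSpace ℝ (Fin 2), 0 ≤ y 1 → ⟪p, y⟫ ≤ w → y 1 ≤ x 1) :
    p 0 ≤ 0 := by
  by_contra! hp
  set c := |x 1| + 1
  let y : EuclideanSpace ℝ (Fin 2) := !₂[(w - p 1 * c) / p 0, c]
  have hy0 : y 0 = (w - p 1 * c) / p 0 := rfl
  have hy1 : y 1 = c := rfl
  have hcost : ⟪p, y⟫ = w := by
    rw [inner_fin_two, hy0, hy1]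
    field_simp
    ring
  have := hmax y (by rw [hy1]; positivity) hcost.le
  linarith [le_abs_self (x 1)]

theorem stmt_12_general
    (X₁ : Set (EuclideanSpace ℝ (Fin 2))) (hX₁ : X₁ = {x | 0 ≤ x 1})
    (X₂ : Set (EuclideanSpace ℝ (Fin 2))) (hX₂ : X₂ = {x | 0 ≤ x 0 ∧ 0 ≤ x 1})
    (e : EuclideanSpace ℝ (Fin 2))
    (u₁ u₂ : EuclideanSpace ℝ (Fin 2) → ℝ)
    (hu₁ : ∀ x, u₁ x = x 1) (hu₂ : ∀ x, u₂ x = x 0 + x 1) :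
    ¬ ∃ (p : EuclideanSpace ℝ (Fin 2)) (x₁ x₂ : EuclideanSpace ℝ (Fin 2)),
        p ≠ 0 ∧
        (x₁ ∈ X₁ ∧ ⟪p, x₁⟫ ≤ ⟪p, e⟫) ∧
        (x₂ ∈ X₂ ∧ ⟪p, x₂⟫ ≤ ⟪p, e⟫) ∧
        (∀ y ∈ X₁, ⟪p, y⟫ ≤ ⟪p, e⟫ → u₁ y ≤ u₁ x₁) ∧
        (∀ y ∈ X₂, ⟪p, y⟫ ≤ ⟪p, e⟫ → u₂ y ≤ u₂ x₂) ∧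
        x₁ + x₂ = e + e := by
  rintro ⟨p, x₁, x₂, -, -, ⟨hx₂, hbudget₂⟩, hmax₁, hmax₂, -⟩
  subst hX₁ hX₂
  have hp_pos : 0 < p 0 :=
    fst_price_pos_of_isMax_add hx₂ hbudget₂ fun y hy hb => by simpa [hu₂] using hmax₂ y hy hb
  have hp_nonpos : p 0 ≤ 0 :=
    fst_price_nonpos_of_isMax_snd fun y hy hb => by simpa [hu₁] using hmax₁ y hy hb
  linarith

/-- In the economy with `X₁ = {x : x² ≥ 0}`, `X₂ = ℝ²₊`, `e₁ = e₂ = (1,1)`,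
`u₁(x) = x²`, `u₂(x) = x¹ + x²`, there is no Walrasian equilibrium. -/
theorem stmt_12
    (X₁ : Set (EuclideanSpace ℝ (Fin 2))) (hX₁ : X₁ = {x | 0 ≤ x 1})
    (X₂ : Set (EuclideanSpace ℝ (Fin 2))) (hX₂ : X₂ = {x | 0 ≤ x 0 ∧ 0 ≤ x 1})
    (e : EuclideanSpace ℝ (Fin 2)) (he : e = WithLp.toLp 2 (fun _ => (1 : ℝ)))
    (u₁ u₂ : EuclideanSpace ℝ (Fin 2) → ℝ)
    (hu₁ : ∀ x, u₁ x = x 1) (hu₂ : ∀ x, u₂ x = x 0 + x 1) :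
    ¬ ∃ (p : EuclideanSpace ℝ (Fin 2)) (x₁ x₂ : EuclideanSpace ℝ (Fin 2)),
        p ≠ 0 ∧
        (x₁ ∈ X₁ ∧ ⟪p, x₁⟫ ≤ ⟪p, e⟫) ∧
        (x₂ ∈ X₂ ∧ ⟪p, x₂⟫ ≤ ⟪p, e⟫) ∧
        (∀ y ∈ X₁, ⟪p, y⟫ ≤ ⟪p, e⟫ → u₁ y ≤ u₁ x₁) ∧
        (∀ y ∈ X₂, ⟪p, y⟫ ≤ ⟪p, e⟫ → u₂ y ≤ u₂ x₂) ∧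
        x₁ + x₂ = e + e :=
  stmt_12_general X₁ hX₁ X₂ hX₂ e u₁ u₂ hu₁ hu₂
end
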